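/- For all integers k₁, k₂ ≥ 1, the three sets S₁ = ⋃_{k≥1} B(a^k*b), S₂ = ⋃_{l≥1} B(a^{k₁}*b^{−l}*a⁻¹), and S₃ = ⋃_{k≥1} B(a^{k₁}*b^{−k₂}*a^k*b) are pairwise disjoint, and each is contained in B(a). -/
import Mathlib


open scoped Pointwise

/-- The free group on two generators. -/
abbrev F₂ := FreeGroup Bool

/-- The generator `a`. -/
def ga : F₂ := FreeGroup.of true

/-- The generator `b`. -/
def gb : F₂ := FreeGroup.of false

/-- The word length `|w|` of an element of the free group. -/
def wl (w : F₂) : ℕ := w.toWord.length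

/-- The cylinder set `B(t)` of elements whose reduced word begins with the reduced word of `t`. -/
def cyl (t : F₂) : Set F₂ := {x | ∃ y : F₂, x = t * y ∧ wl x = wl t + wl y}

namespace Stmt15Aux

open FreeGroup List

abbrev A : Bool × Bool := (true, true)
abbrev A' : Bool × Bool := (true, false)
abbrev B : Bool × Bool := (false, true)
abbrev B' : Bool × Bool := (false, false)

lemma red_eq_of_le {L M : List (Bool × Bool)} (h : FreeGroup.Red L M)
    (hl : L.length ≤ M.length) : L = M := by
  rcases Relation.ReflTransGen.cases_head h with h | ⟨c, hs, hr⟩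
  · exact h
  · have h1 := hs.length
    have h2 := FreeGroup.Red.length_le hr
    omega

lemma mem_cyl_iff {t x : F₂} : x ∈ cyl t ↔ t.toWord <+: x.toWord := by
  constructor
  · rintro ⟨y, rfl, hl⟩
    have h2 : (t * y).toWord = reduce (t.toWord ++ y.toWord) := by
      rw [← toWord_mk]
      rw [← FreeGroup.mul_mk, mk_toWord, mk_toWord]
    have h3 : FreeGroup.Red (t.toWord ++ y.toWord) (t * y).toWord :=
      h2 ▸ FreeGroup.reduce.red
    have h4 := red_eq_of_le h3 (by simp only [wl] at hl; simp [hl])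
    exact ⟨y.toWord, h4⟩
  · rintro ⟨s, hs⟩
    refine ⟨FreeGroup.mk s, ?_, ?_⟩
    · rw [← mk_toWord (x := x), ← hs, ← FreeGroup.mul_mk, mk_toWord]
    · have hx : x = t * FreeGroup.mk s := by
        rw [← mk_toWord (x := x), ← hs, ← FreeGroup.mul_mk, mk_toWord]
      have h2 : x.toWord = reduce (t.toWord ++ (FreeGroup.mk s).toWord) := by
        rw [hx, ← toWord_mk, ← FreeGroup.mul_mk, mk_toWord, mk_toWord]
      have h3 : x.toWord.length ≤ t.toWord.length + (FreeGroup.mk s).toWord.length := by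
        rw [h2]
        calc (reduce (t.toWord ++ (FreeGroup.mk s).toWord)).length
            ≤ (t.toWord ++ (FreeGroup.mk s).toWord).length := FreeGroup.reduce.red.length_le
          _ = _ := by simp
      have h4 : (FreeGroup.mk s).toWord.length ≤ s.length := by
        rw [toWord_mk]; exact FreeGroup.reduce.red.length_le
      have h5 : x.toWord.length = t.toWord.length + s.length := by
        rw [← hs]; simp
      simp only [wl]; omega

lemma mk_pow (x : Bool × Bool) (n : ℕ) :
    (FreeGroup.mk [x]) ^ n = FreeGroup.mk (List.replicate n x) := by
  induction n with
  | zero => simp [FreeGroup.one_eq_mk]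
  | succ n ih => rw [pow_succ, ih, FreeGroup.mul_mk, ← List.replicate_succ']

lemma ga_mk : ga = FreeGroup.mk [A] := rfl
lemma gb_mk : gb = FreeGroup.mk [B] := rfl

lemma ga_inv_mk : ga⁻¹ = FreeGroup.mk [A'] := by
  rw [ga_mk, FreeGroup.inv_mk]; rfl

lemma gb_inv_mk : gb⁻¹ = FreeGroup.mk [B'] := by
  rw [gb_mk, FreeGroup.inv_mk]; rfl

lemma reduce_rep_append (n : ℕ) (p : Bool × Bool) (L : List (Bool × Bool))
    (hL : FreeGroup.reduce L = L)
    (hhd : ∀ q ∈ L.head?, ¬(p.1 = q.1 ∧ p.2 = !q.2)) :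
    FreeGroup.reduce (List.replicate n p ++ L) = List.replicate n p ++ L := by
  induction n with
  | zero => simpa
  | succ n ih =>
    rw [List.replicate_succ, List.cons_append, FreeGroup.reduce.cons, ih]
    rcases n with _ | n
    · rcases L with _ | ⟨q, t⟩
      · rfl
      · have := hhd q (by simp)
        simp [this]
    · rw [List.replicate_succ, List.cons_append]
      simp

lemma head?_rep_append (n : ℕ) (hn : 1 ≤ n) (p : Bool × Bool) (L : List (Bool × Bool)) :
    (List.replicate n p ++ L).head? = some p := by
  obtain ⟨m, rfl⟩ := Nat.exists_eq_add_of_le hn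
  rw [add_comm, List.replicate_succ, List.cons_append]; rfl

/-- word of `ga^k * gb` -/
def w₁ (k : ℕ) : List (Bool × Bool) := List.replicate k A ++ [B]

/-- word of `ga^k₁ * gb⁻¹^l * ga⁻¹` -/
def w₂ (k₁ l : ℕ) : List (Bool × Bool) := List.replicate k₁ A ++ (List.replicate l B' ++ [A'])

/-- word of `ga^k₁ * gb⁻¹^k₂ * ga^k * gb` -/
def w₃ (k₁ k₂ k : ℕ) : List (Bool × Bool) :=
  List.replicate k₁ A ++ (List.replicate k₂ B' ++ (List.replicate k A ++ [B]))

lemma toWord_w₁ (k : ℕ) : (ga ^ k * gb).toWord = w₁ k := by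
  rw [ga_mk, gb_mk, mk_pow, FreeGroup.mul_mk, FreeGroup.toWord_mk, w₁]
  exact reduce_rep_append _ _ _ rfl (by rintro q hq; simp at hq; subst hq; simp)

lemma toWord_w₂ (k₁ l : ℕ) (hl : 1 ≤ l) :
    (ga ^ k₁ * gb⁻¹ ^ l * ga⁻¹).toWord = w₂ k₁ l := by
  rw [ga_inv_mk, gb_inv_mk, ga_mk, mk_pow, mk_pow, FreeGroup.mul_mk, FreeGroup.mul_mk,
    List.append_assoc, FreeGroup.toWord_mk, w₂]
  refine reduce_rep_append _ _ _ ?_ ?_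
  · exact reduce_rep_append _ _ _ rfl (by rintro q hq; simp at hq; subst hq; simp)
  · rw [head?_rep_append l hl]
    rintro q hq; simp at hq; subst hq; simp

lemma toWord_w₃ (k₁ k₂ k : ℕ) (h2 : 1 ≤ k₂) (hk : 1 ≤ k) :
    (ga ^ k₁ * gb⁻¹ ^ k₂ * (ga ^ k * gb)).toWord = w₃ k₁ k₂ k := by
  rw [gb_inv_mk, ga_mk, gb_mk, mk_pow, mk_pow, mk_pow, FreeGroup.mul_mk, FreeGroup.mul_mk,
    FreeGroup.mul_mk, FreeGroup.toWord_mk, w₃, List.append_assoc]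
  refine reduce_rep_append _ _ _ ?_ ?_
  · refine reduce_rep_append _ _ _ ?_ ?_
    · exact reduce_rep_append _ _ _ rfl (by rintro q hq; simp at hq; subst hq; simp)
    · rw [head?_rep_append k hk]
      rintro q hq; simp at hq; subst hq; simp
  · rw [head?_rep_append k₂ h2]
    rintro q hq; simp at hq; subst hq; simp

lemma len_w₁ (k : ℕ) : (w₁ k).length = k + 1 := by simp [w₁]
lemma len_w₂ (k₁ l : ℕ) : (w₂ k₁ l).length = k₁ + l + 1 := by simp [w₂]; omega
lemma len_w₃ (k₁ k₂ k : ℕ) : (w₃ k₁ k₂ k).length = k₁ + k₂ + k + 1 := by simp [w₃]; omega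

lemma entry₂ {α : Type*} (n : ℕ) (p q : α) (i : ℕ) (hi : i < n + 1) :
    (List.replicate n p ++ [q])[i]'(by simpa using hi) = if i < n then p else q := by
  rw [List.getElem_append]
  split <;> rename_i h
  · simp at h
    simp [h]
  · simp at h
    have : i - n = 0 := by omega
    simp [this, Nat.not_lt.mpr h]

lemma entry_w₁ (k i : ℕ) (hi : i < k + 1) :
    (w₁ k)[i]'(by rw [len_w₁]; omega) = if i < k then A else B :=
  entry₂ k A B i hi

lemma entry_rep {α : Type*} (n : ℕ) (p : α) (L : List α) (i : ℕ) (hL : i - n < L.length)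
    (h : i < n + L.length) :
    (List.replicate n p ++ L)[i]'(by simpa using h) =
      if i < n then p else L[i - n]'hL := by
  rw [List.getElem_append]
  split <;> rename_i h'
  · simp at h'
    simp [h']
  · simp at h' ⊢
    simp [Nat.not_lt.mpr h']

lemma entry_w₂ (k₁ l i : ℕ) (hi : i < k₁ + l + 1) :
    (w₂ k₁ l)[i]'(by rw [len_w₂]; omega) =
      if i < k₁ then A else if i < k₁ + l then B' else A' := by
  unfold w₂
  rw [entry_rep k₁ A _ i (by simp; omega) (by simp; omega)]
  split <;> rename_i h
  · rfl
  · rw [entry₂ l B' A' (i - k₁) (by omega)]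
    by_cases h2 : i < k₁ + l
    · rw [if_pos (by omega), if_pos h2]
    · rw [if_neg (by omega), if_neg h2]

lemma entry_w₃ (k₁ k₂ k i : ℕ) (hi : i < k₁ + k₂ + k + 1) :
    (w₃ k₁ k₂ k)[i]'(by rw [len_w₃]; omega) =
      if i < k₁ then A else if i < k₁ + k₂ then B' else if i < k₁ + k₂ + k then A else B := by
  unfold w₃
  rw [entry_rep k₁ A _ i (by simp; omega) (by simp; omega)]
  split <;> rename_i h
  · rfl
  · rw [entry_rep k₂ B' _ (i - k₁) (by simp; omega) (by simp; omega)]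
    by_cases h2 : i < k₁ + k₂
    · rw [if_pos (by omega), if_pos h2]
    · rw [if_neg (by omega), if_neg h2]
      rw [entry₂ k A B (i - k₁ - k₂) (by omega)]
      by_cases h3 : i < k₁ + k₂ + k
      · rw [if_pos (by omega), if_pos h3]
      · rw [if_neg (by omega), if_neg h3]

lemma no_common {w w' z : List (Bool × Bool)} (h : w <+: z) (h' : w' <+: z) (i : ℕ)
    (hi : i < w.length) (hi' : i < w'.length) (hne : w[i] ≠ w'[i]) : False := by
  apply hne
  rw [h.getElem hi, h'.getElem hi']

lemma one_le_prefix (n : ℕ) (hn : 1 ≤ n) (p : Bool × Bool) (L : List (Bool × Bool)) :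
    [p] <+: List.replicate n p ++ L := by
  obtain ⟨m, rfl⟩ := Nat.exists_eq_add_of_le hn
  rw [add_comm, List.replicate_succ, List.cons_append]
  exact ⟨_, rfl⟩

end Stmt15Aux

open Stmt15Aux in
/-- For `k₁, k₂ ≥ 1` the sets `S₁ = ⋃_{k≥1} B(aᵏb)`, `S₂ = ⋃_{l≥1} B(a^{k₁}b^{-l}a⁻¹)` and
`S₃ = ⋃_{k≥1} B(a^{k₁}b^{-k₂}aᵏb)` are pairwise disjoint subsets of `B(a)`. -/
theorem stmt_15 (k₁ k₂ : ℕ) (h1 : 1 ≤ k₁) (h2 : 1 ≤ k₂) :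
    ((⋃ k ∈ {k : ℕ | 1 ≤ k}, cyl (ga ^ k * gb)) ∩
        (⋃ l ∈ {l : ℕ | 1 ≤ l}, cyl (ga ^ k₁ * gb⁻¹ ^ l * ga⁻¹)) = ∅ ∧
      (⋃ k ∈ {k : ℕ | 1 ≤ k}, cyl (ga ^ k * gb)) ∩
        (⋃ k ∈ {k : ℕ | 1 ≤ k}, cyl (ga ^ k₁ * gb⁻¹ ^ k₂ * ga ^ k * gb)) = ∅ ∧
      (⋃ l ∈ {l : ℕ | 1 ≤ l}, cyl (ga ^ k₁ * gb⁻¹ ^ l * ga⁻¹)) ∩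
        (⋃ k ∈ {k : ℕ | 1 ≤ k}, cyl (ga ^ k₁ * gb⁻¹ ^ k₂ * ga ^ k * gb)) = ∅) ∧
    (⋃ k ∈ {k : ℕ | 1 ≤ k}, cyl (ga ^ k * gb)) ⊆ cyl ga ∧
    (⋃ l ∈ {l : ℕ | 1 ≤ l}, cyl (ga ^ k₁ * gb⁻¹ ^ l * ga⁻¹)) ⊆ cyl ga ∧
    (⋃ k ∈ {k : ℕ | 1 ≤ k}, cyl (ga ^ k₁ * gb⁻¹ ^ k₂ * ga ^ k * gb)) ⊆ cyl ga := by
  have hw1 : ∀ (k : ℕ) (x : F₂), x ∈ cyl (ga ^ k * gb) → w₁ k <+: x.toWord := by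
    intro k x hx
    rw [← toWord_w₁ k]; exact mem_cyl_iff.mp hx
  have hw2 : ∀ (l : ℕ), 1 ≤ l → ∀ (x : F₂), x ∈ cyl (ga ^ k₁ * gb⁻¹ ^ l * ga⁻¹) →
      w₂ k₁ l <+: x.toWord := by
    intro l hl x hx
    rw [← toWord_w₂ k₁ l hl]; exact mem_cyl_iff.mp hx
  have hw3 : ∀ (k : ℕ), 1 ≤ k → ∀ (x : F₂), x ∈ cyl (ga ^ k₁ * gb⁻¹ ^ k₂ * ga ^ k * gb) →
      w₃ k₁ k₂ k <+: x.toWord := by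
    intro k hk x hx
    rw [← toWord_w₃ k₁ k₂ k h2 hk, ← mul_assoc]; exact mem_cyl_iff.mp hx
  have hga : ∀ (x : F₂) (n : ℕ), 1 ≤ n → ∀ L, List.replicate n A ++ L <+: x.toWord →
      x ∈ cyl ga := by
    intro x n hn L hpre
    rw [mem_cyl_iff]
    have : ga.toWord = [A] := FreeGroup.toWord_of true
    rw [this]
    exact (one_le_prefix n hn A L).trans hpre
  refine ⟨⟨?_, ?_, ?_⟩, ?_, ?_, ?_⟩
  · rw [Set.eq_empty_iff_forall_notMem]
    rintro x ⟨hx1, hx2⟩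
    simp only [Set.mem_iUnion, Set.mem_setOf_eq] at hx1 hx2
    obtain ⟨k, hk, hxk⟩ := hx1
    obtain ⟨l, hl, hxl⟩ := hx2
    have p1 := hw1 k x hxk
    have p2 := hw2 l hl x hxl
    rcases le_or_gt k k₁ with h | h
    · refine no_common p1 p2 k (by rw [len_w₁]; omega) (by rw [len_w₂]; omega) ?_
      rw [entry_w₁ k k (by omega), entry_w₂ k₁ l k (by omega)]
      split_ifs <;> first | decide | (exfalso; omega)
    · refine no_common p1 p2 k₁ (by rw [len_w₁]; omega) (by rw [len_w₂]; omega) ?_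
      rw [entry_w₁ k k₁ (by omega), entry_w₂ k₁ l k₁ (by omega)]
      split_ifs <;> first | decide | (exfalso; omega)
  · rw [Set.eq_empty_iff_forall_notMem]
    rintro x ⟨hx1, hx2⟩
    simp only [Set.mem_iUnion, Set.mem_setOf_eq] at hx1 hx2
    obtain ⟨k, hk, hxk⟩ := hx1
    obtain ⟨k', hk', hxk'⟩ := hx2
    have p1 := hw1 k x hxk
    have p3 := hw3 k' hk' x hxk'
    rcases le_or_gt k k₁ with h | h
    · refine no_common p1 p3 k (by rw [len_w₁]; omega) (by rw [len_w₃]; omega) ?_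
      rw [entry_w₁ k k (by omega), entry_w₃ k₁ k₂ k' k (by omega)]
      split_ifs <;> first | decide | (exfalso; omega)
    · refine no_common p1 p3 k₁ (by rw [len_w₁]; omega) (by rw [len_w₃]; omega) ?_
      rw [entry_w₁ k k₁ (by omega), entry_w₃ k₁ k₂ k' k₁ (by omega)]
      split_ifs <;> first | decide | (exfalso; omega)
  · rw [Set.eq_empty_iff_forall_notMem]
    rintro x ⟨hx1, hx2⟩
    simp only [Set.mem_iUnion, Set.mem_setOf_eq] at hx1 hx2
    obtain ⟨l, hl, hxl⟩ := hx1
    obtain ⟨k, hk, hxk⟩ := hx2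
    have p2 := hw2 l hl x hxl
    have p3 := hw3 k hk x hxk
    rcases le_or_gt l k₂ with h | h
    · refine no_common p2 p3 (k₁ + l) (by rw [len_w₂]; omega) (by rw [len_w₃]; omega) ?_
      rw [entry_w₂ k₁ l (k₁ + l) (by omega), entry_w₃ k₁ k₂ k (k₁ + l) (by omega)]
      split_ifs <;> first | decide | (exfalso; omega)
    · refine no_common p2 p3 (k₁ + k₂) (by rw [len_w₂]; omega) (by rw [len_w₃]; omega) ?_
      rw [entry_w₂ k₁ l (k₁ + k₂) (by omega), entry_w₃ k₁ k₂ k (k₁ + k₂) (by omega)]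
      split_ifs <;> first | decide | (exfalso; omega)
  · intro x hx
    simp only [Set.mem_iUnion, Set.mem_setOf_eq] at hx
    obtain ⟨k, hk, hxk⟩ := hx
    exact hga x k hk [B] (hw1 k x hxk)
  · intro x hx
    simp only [Set.mem_iUnion, Set.mem_setOf_eq] at hx
    obtain ⟨l, hl, hxl⟩ := hx
    exact hga x k₁ h1 _ (hw2 l hl x hxl)
  · intro x hx
    simp only [Set.mem_iUnion, Set.mem_setOf_eq] at hx
    obtain ⟨k, hk, hxk⟩ := hx
    exact hga x k₁ h1 _ (hw3 k hk x hxk)
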